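/- Assume h : {1,…,n} → ℝ is nonnegative and nondecreasing. Let 1 ≤ t ≤ n−2, let τ ∈ T_t, and let T be an integer with t + 2 ≤ T ≤ n. Then for every φ ∈ ℝ, f_τ^T(φ) ≥ inf over φ', φ'' ∈ ℝ of [ f_τ^t(φ') + C(t, t+1, φ', φ'') + C(t+1, T, φ'', φ) ], where τ is viewed as an element of T_T. -/

import Mathlib

/-!
Given fitted values `φs` for the changepoints `τ` on `y_{1:T}`, cut the last segment's line at
times `t` and `t + 1`, at the values the line itself takes there. The data cost does not change,
and the penalty of the last segment drops from `h (T - τ_k)` to `h (t - τ_k)` by monotonicity of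
`h`, so every candidate for `f_τ^T(φ)` dominates a candidate of the right-hand side. The infima
involved are bounded below because, for a fixed `τ`, the penalties are constants and the segment
costs are nonnegative.
-/

open Finset

/-- Segment cost `C(s,t,φ,ψ)`: cost of fitting data `y_{s+1:t}` with a linear
function taking value `φ` at time `s` and value `ψ` at time `t`. -/
noncomputable def segCost (y : ℕ → ℝ) (σ : ℝ) (s t : ℕ) (φ ψ : ℝ) : ℝ :=
  (1 / σ ^ 2) * ∑ j ∈ Finset.Icc (s + 1) t,
    (y j - φ - ((ψ - φ) / ((t : ℝ) - (s : ℝ))) * ((j : ℝ) - (s : ℝ))) ^ 2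

/-- `ValidCP t τ` : `τ` is a (possibly empty) strictly increasing vector of
changepoints `0 < τ₁ < ⋯ < τ_k < t`, i.e. an element of `T_t`. -/
def ValidCP (t : ℕ) (τ : List ℕ) : Prop :=
  τ.Chain' (· < ·) ∧ ∀ x ∈ τ, 0 < x ∧ x < t

/-- Penalised cost of segmenting `y_{1:t}` with changepoints `τ = (τ₁,…,τ_k)`,
fitted values `φs 0, …, φs k` at times `0, τ₁, …, τ_k`, and fitted value `φ` at time `t`. -/
noncomputable def segTotal (y : ℕ → ℝ) (σ β : ℝ) (h : ℕ → ℝ) (t : ℕ)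
    (τ : List ℕ) (φs : ℕ → ℝ) (φ : ℝ) : ℝ :=
  let p : ℕ → ℕ := fun i => (0 :: τ).getD i 0
  (∑ i ∈ Finset.range τ.length,
      (segCost y σ (p i) (p (i + 1)) (φs i) (φs (i + 1)) + h (p (i + 1) - p i)))
    + segCost y σ (p τ.length) t (φs τ.length) φ + h (t - p τ.length)
    + β * ((τ.length : ℝ) + 1)

/-- `f_τ^t(φ)` : minimum penalised cost of segmenting `y_{1:t}` with changepoints `τ`
and fitted value `φ` at time `t`, minimised over the fitted values at the changepoints. -/
noncomputable def fseg (y : ℕ → ℝ) (σ β : ℝ) (h : ℕ → ℝ) (t : ℕ)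
    (τ : List ℕ) (φ : ℝ) : ℝ :=
  ⨅ φs : ℕ → ℝ, segTotal y σ β h t τ φs φ

/-- `f^t(φ)` : minimum penalised cost of segmenting `y_{1:t}` with fitted value `φ`
at time `t`, minimised over all changepoint vectors in `T_t`; `f^0 ≡ 0`. -/
noncomputable def fDP (y : ℕ → ℝ) (σ β : ℝ) (h : ℕ → ℝ) (t : ℕ) (φ : ℝ) : ℝ :=
  if t = 0 then 0 else ⨅ τ : {τ : List ℕ // ValidCP t τ}, fseg y σ β h t τ.1 φ

lemma segCost_nonneg (y : ℕ → ℝ) (σ : ℝ) (s t : ℕ) (φ ψ : ℝ) :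
    0 ≤ segCost y σ s t φ ψ := by
  unfold segCost
  positivity

/-- `a + (b - a) * (m - s) / (T - s)` is the value at `m` of the line from `(s, a)` to `(T, b)`. -/
lemma segCost_split (y : ℕ → ℝ) (σ : ℝ) {s m T : ℕ} (hsm : s < m) (hmT : m < T) (a b : ℝ) :
    segCost y σ s T a b
      = segCost y σ s m a (a + (b - a) * ((m : ℝ) - s) / ((T : ℝ) - s))
        + segCost y σ m T (a + (b - a) * ((m : ℝ) - s) / ((T : ℝ) - s)) b := by
  have hsm' : (s : ℝ) < m := by exact_mod_cast hsm
  have hmT' : (m : ℝ) < T := by exact_mod_cast hmT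
  have hms : (m : ℝ) - s ≠ 0 := by linarith
  have hTs : (T : ℝ) - s ≠ 0 := by linarith
  have hTm : (T : ℝ) - m ≠ 0 := by linarith
  unfold segCost
  rw [Icc_add_one_left_eq_Ioc, Icc_add_one_left_eq_Ioc, Icc_add_one_left_eq_Ioc,
    ← sum_Ioc_consecutive _ hsm.le hmT.le, mul_add]
  congr 2 <;> refine sum_congr rfl fun j _ => ?_ <;> congr 1 <;> field_simp <;> ring

lemma ciInf_ciInf_le {α β γ : Type*} [ConditionallyCompleteLattice γ] [Nonempty β]
    {f : α → β → γ} {L : γ} (hL : ∀ a b, L ≤ f a b) (a : α) (b : β) :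
    ⨅ a, ⨅ b, f a b ≤ f a b :=
  (ciInf_le ⟨L, by rintro _ ⟨a', rfl⟩; exact le_ciInf (hL a')⟩ a).trans
    (ciInf_le ⟨L, by rintro _ ⟨b', rfl⟩; exact hL a b'⟩ b)

lemma ValidCP.getD_length_lt {t : ℕ} {τ : List ℕ} (hτ : ValidCP t τ) (ht : 0 < t) :
    (0 :: τ).getD τ.length 0 < t := by
  rw [List.getD_eq_getElem _ _ (by simp)]
  rcases List.mem_cons.mp (List.getElem_mem (l := 0 :: τ) (n := τ.length) (by simp))
    with h0 | hmem
  · rwa [h0]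
  · exact (hτ.2 _ hmem).2

section segTotal

variable (y : ℕ → ℝ) (σ β : ℝ) (h : ℕ → ℝ) (τ : List ℕ)

lemma exists_forall_le_segTotal (t : ℕ) :
    ∃ L, ∀ φs φ, L ≤ segTotal y σ β h t τ φs φ := by
  refine ⟨∑ i ∈ range τ.length, h ((0 :: τ).getD (i + 1) 0 - (0 :: τ).getD i 0)
      + h (t - (0 :: τ).getD τ.length 0) + β * ((τ.length : ℝ) + 1), fun φs φ => ?_⟩
  unfold segTotal
  have hsum := sum_le_sum fun i (_ : i ∈ range τ.length) =>
    le_add_of_nonneg_left (a := h ((0 :: τ).getD (i + 1) 0 - (0 :: τ).getD i 0))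
      (segCost_nonneg y σ ((0 :: τ).getD i 0) ((0 :: τ).getD (i + 1) 0) (φs i) (φs (i + 1)))
  have hlast := segCost_nonneg y σ ((0 :: τ).getD τ.length 0) t (φs τ.length) φ
  linarith

lemma exists_forall_le_fseg (t : ℕ) : ∃ L, ∀ φ, L ≤ fseg y σ β h t τ φ := by
  obtain ⟨L, hL⟩ := exists_forall_le_segTotal y σ β h τ t
  exact ⟨L, fun φ => le_ciInf fun φs => hL φs φ⟩

lemma fseg_le_segTotal (t : ℕ) (φs : ℕ → ℝ) (φ : ℝ) :
    fseg y σ β h t τ φ ≤ segTotal y σ β h t τ φs φ := by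
  obtain ⟨L, hL⟩ := exists_forall_le_segTotal y σ β h τ t
  exact ciInf_le ⟨L, by rintro _ ⟨φs', rfl⟩; exact hL φs' φ⟩ φs

lemma exists_segTotal_add_segCost_le {m T : ℕ} (hm : (0 :: τ).getD τ.length 0 < m)
    (hmT : m < T) (hh : h (m - (0 :: τ).getD τ.length 0) ≤ h (T - (0 :: τ).getD τ.length 0))
    (φs : ℕ → ℝ) (φ : ℝ) :
    ∃ c, segTotal y σ β h m τ φs c + segCost y σ m T c φ ≤ segTotal y σ β h T τ φs φ := by
  set p := (0 :: τ).getD τ.length 0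
  refine ⟨φs τ.length + (φ - φs τ.length) * ((m : ℝ) - p) / ((T : ℝ) - p), ?_⟩
  unfold segTotal
  dsimp only
  rw [segCost_split y σ hm hmT]
  linarith

end segTotal

theorem statement11_general (n : ℕ) (y : ℕ → ℝ) (σ : ℝ)
    (β : ℝ) (h : ℕ → ℝ)
    (hmono : ∀ i j, 1 ≤ i → i ≤ j → j ≤ n → h i ≤ h j)
    (t : ℕ) (ht1 : 1 ≤ t)
    (τ : List ℕ) (hτ : ValidCP t τ)
    (T : ℕ) (hT1 : t + 2 ≤ T) (hTn : T ≤ n) (φ : ℝ) :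
    fseg y σ β h T τ φ ≥
      ⨅ φ' : ℝ, ⨅ φ'' : ℝ,
        (fseg y σ β h t τ φ' + segCost y σ t (t + 1) φ' φ''
          + segCost y σ (t + 1) T φ'' φ) := by
  obtain ⟨L, hL⟩ := exists_forall_le_fseg y σ β h τ t
  have hlast := hτ.getD_length_lt ht1
  refine le_ciInf fun φs => ?_
  obtain ⟨c, hc⟩ := exists_segTotal_add_segCost_le y σ β h τ (T := T) hlast (by omega)
    (hmono _ _ (by omega) (by omega) (by omega)) φs φ
  set c' := c + (φ - c) * (((t + 1 : ℕ) : ℝ) - t) / ((T : ℝ) - t)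
  calc ⨅ φ' : ℝ, ⨅ φ'' : ℝ, (fseg y σ β h t τ φ' + segCost y σ t (t + 1) φ' φ''
          + segCost y σ (t + 1) T φ'' φ)
      ≤ fseg y σ β h t τ c + segCost y σ t (t + 1) c c' + segCost y σ (t + 1) T c' φ :=
        ciInf_ciInf_le (L := L) (fun φ' φ'' => by
          linarith [hL φ', segCost_nonneg y σ t (t + 1) φ' φ'',
            segCost_nonneg y σ (t + 1) T φ'' φ]) c c'
    _ = fseg y σ β h t τ c + segCost y σ t T c φ := by
        rw [add_assoc, ← segCost_split y σ (by omega) (by omega)]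
    _ ≤ segTotal y σ β h t τ φs c + segCost y σ t T c φ := by
        gcongr; exact fseg_le_segTotal y σ β h τ t φs c
    _ ≤ segTotal y σ β h T τ φs φ := hc

/-- for nonnegative nondecreasing `h`, `τ ∈ T_t` and `t + 2 ≤ T ≤ n`,
`f_τ^T(φ) ≥ inf_{φ',φ''} [f_τ^t(φ') + C(t,t+1,φ',φ'') + C(t+1,T,φ'',φ)]`. -/
theorem statement11 (n : ℕ) (hn : 1 ≤ n) (y : ℕ → ℝ) (σ : ℝ) (hσ : 0 < σ)
    (β : ℝ) (hβ : 0 < β) (h : ℕ → ℝ)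
    (hpos : ∀ i, 1 ≤ i → i ≤ n → 0 ≤ h i)
    (hmono : ∀ i j, 1 ≤ i → i ≤ j → j ≤ n → h i ≤ h j)
    (t : ℕ) (ht1 : 1 ≤ t) (htn : t + 2 ≤ n)
    (τ : List ℕ) (hτ : ValidCP t τ)
    (T : ℕ) (hT1 : t + 2 ≤ T) (hTn : T ≤ n) (φ : ℝ) :
    fseg y σ β h T τ φ ≥
      ⨅ φ' : ℝ, ⨅ φ'' : ℝ,
        (fseg y σ β h t τ φ' + segCost y σ t (t + 1) φ' φ''
          + segCost y σ (t + 1) T φ'' φ) :=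
  statement11_general n y σ β h hmono t ht1 τ hτ T hT1 hTn φ
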